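/- arXiv:2107.10123 — 9 statements merged into one kernel-verified Lean document; each statement's English description precedes it below -/
import Mathlib

section
/- If F : H → ℝ is differentiable on a real Hilbert space H with nonempty set of minimizers X*, and F is β-quasi-strongly convex (i.e., for every x ∈ H and every projection x̄ of x onto X*, F(x̄) ≥ F(x) + ⟨∇F(x), x̄ - x⟩ + (β/2)‖x - x̄‖², with projections assumed to exist), then F satisfies the Polyak-Łojasiewicz condition with parameter μ = β, i.e., F(x) - min F ≤ (1/(2β))‖∇F(x)‖² for all x ∈ H. -/
open RealInnerProductSpace

/-- Quasi-strong convexity implies the Polyak-Łojasiewicz condition with μ = β. -/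
theorem qsc_implies_pl {H : Type*} [NormedAddCommGroup H] [InnerProductSpace ℝ H]
    [CompleteSpace H]
    (F : H → ℝ) (F' : H → H) (hdiff : ∀ x, HasGradientAt F (F' x) x)
    (Xs : Set H) (hXs : Xs = {x | ∀ y, F x ≤ F y}) (hne : Xs.Nonempty)
    (Fstar : ℝ) (hFstar : ∀ x ∈ Xs, F x = Fstar)
    (β : ℝ) (hβ : 0 < β)
    (hproj : ∀ x : H, ∃ xb ∈ Xs, ∀ y ∈ Xs, ‖x - xb‖ ≤ ‖x - y‖)
    (hqsc : ∀ x xb, xb ∈ Xs → (∀ y ∈ Xs, ‖x - xb‖ ≤ ‖x - y‖) →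
      F x + ⟪F' x, xb - x⟫ + β / 2 * ‖x - xb‖ ^ 2 ≤ F xb) :
    ∀ x, F x - Fstar ≤ 1 / (2 * β) * ‖F' x‖ ^ 2 := by
  intro x
  obtain ⟨xb, hxb, hmin⟩ := hproj x
  have h := hqsc x xb hxb hmin
  have hF : F xb = Fstar := hFstar xb hxb
  have hcs : ⟪F' x, x - xb⟫ ≤ ‖F' x‖ * ‖x - xb‖ := real_inner_le_norm _ _
  have hflip : ⟪F' x, xb - x⟫ = -⟪F' x, x - xb⟫ := by
    rw [← inner_neg_right]; congr 1; abel
  have hsq : (0:ℝ) ≤ (‖F' x‖ - β * ‖x - xb‖)^2 := sq_nonneg _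
  rw [hflip] at h
  rw [div_mul_eq_mul_div, le_div_iff₀ (by positivity)]
  nlinarith [hsq, hcs, h]
end

section
/- If F : H → ℝ is convex and differentiable with L-Lipschitz gradient, has a nonempty set of minimizers X*, and satisfies the Polyak-Łojasiewicz condition with parameter μ > 0, then F is quasi-strongly convex with parameter β = μ²/L: for every x ∈ H and every projection x̄ of x onto X*, F(x̄) ≥ F(x) + ⟨∇F(x), x̄ - x⟩ + (μ²/(2L))‖x - x̄‖². -/
/-!
At the projection `xb` the gradient vanishes, so the Baillon–Haddad inequality gives
`F xb ≥ F x + ⟪∇F x, xb - x⟫ + ‖∇F x‖² / (2L)`, and it suffices to prove the error bound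
`‖∇F x‖ ≥ μ · dist(x, X*)`. By PL this follows from quadratic growth
`F x - F* ≥ (μ/2) · dist(x, X*)²`, which comes from running gradient descent with step `η` from `x`:
PL makes `F - F*` decay geometrically, and every step is at most `√(2/μ) / (1 - Lη/2)` times the
decrease of `√(F - F*)`. So the iterates converge to a minimizer within distance
`√(2/μ) √(F x - F*) / (1 - Lη/2)` of `x`; then let `η → 0`.
-/

open RealInnerProductSpace Filter Topology Metric

def gradientStep {H : Type*} [NormedAddCommGroup H] [InnerProductSpace ℝ H] (f' : H → H) (η : ℝ)
    (x : H) : H :=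
  x - η • f' x

theorem exists_tendsto_dist_le_of_dist_le_sub {X : Type*} [PseudoMetricSpace X] [CompleteSpace X]
    {x : ℕ → X} {u : ℕ → ℝ} (hu : Tendsto u atTop (𝓝 0))
    (hx : ∀ n, dist (x n) (x (n + 1)) ≤ u n - u (n + 1)) :
    ∃ p, Tendsto x atTop (𝓝 p) ∧ dist (x 0) p ≤ u 0 := by
  have hsum : HasSum (fun n => u n - u (n + 1)) (u 0) := by
    refine (hasSum_iff_tendsto_nat_of_nonneg (fun n => dist_nonneg.trans (hx n)) _).2 ?_
    simp_rw [Finset.sum_range_sub']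
    simpa using hu.const_sub (u 0)
  obtain ⟨p, hp⟩ :=
    cauchySeq_tendsto_of_complete (cauchySeq_of_dist_le_of_summable _ hx hsum.summable)
  exact ⟨p, hp, hsum.tsum_eq ▸ dist_le_tsum_of_dist_le_of_tendsto₀ _ hx hsum.summable hp⟩

section

variable {H : Type*} [NormedAddCommGroup H] [InnerProductSpace ℝ H] [CompleteSpace H]
  {f : H → ℝ}

theorem HasGradientAt.hasDerivAt_add_smul {g x v : H} {t : ℝ}
    (hf : HasGradientAt f g (x + t • v)) :
    HasDerivAt (fun s : ℝ => f (x + s • v)) ⟪g, v⟫ t := by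
  have hline : HasDerivAt (fun s : ℝ => x + s • v) v t := by
    simpa using ((hasDerivAt_id t).smul_const v).const_add x
  simpa [Function.comp_def] using hf.hasFDerivAt.comp_hasDerivAt t hline

theorem IsLocalMin.hasGradientAt_eq_zero {g x : H} (hmin : IsLocalMin f x)
    (hf : HasGradientAt f g x) : g = 0 := by
  simpa using hmin.hasFDerivAt_eq_zero hf.hasFDerivAt

theorem ConvexOn.add_inner_le_of_hasGradientAt {g x : H} (hconv : ConvexOn ℝ Set.univ f)
    (hf : HasGradientAt f g x) (y : H) : f x + ⟪g, y - x⟫ ≤ f y := by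
  have hline : ConvexOn ℝ Set.univ (fun t : ℝ => f (x + t • (y - x))) := by
    simpa [Function.comp_def, AffineMap.lineMap_apply, add_comm] using
      hconv.comp_affineMap (AffineMap.lineMap x y)
  have hslope := hline.le_slope_of_hasDerivAt (Set.mem_univ 0) (Set.mem_univ 1) one_pos
    (HasGradientAt.hasDerivAt_add_smul (by simpa using hf))
  simp [slope_def_field] at hslope
  linarith

variable {f' : H → H} {K : NNReal}

theorem le_add_inner_add_sq_of_lipschitzWith (hf : ∀ x, HasGradientAt f (f' x) x)
    (hK : LipschitzWith K f') (x y : H) :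
    f y ≤ f x + ⟪f' x, y - x⟫ + K / 2 * ‖y - x‖ ^ 2 := by
  set v := y - x
  have hderiv (t : ℝ) : HasDerivAt (fun s : ℝ => f (x + s • v)) ⟪f' (x + t • v), v⟫ t :=
    (hf _).hasDerivAt_add_smul
  have hbound (t : ℝ) (ht : 0 ≤ t) : ⟪f' (x + t • v), v⟫ ≤ ⟪f' x, v⟫ + K * t * ‖v‖ ^ 2 := by
    have hlip : ‖f' (x + t • v) - f' x‖ ≤ K * (t * ‖v‖) := by
      simpa [dist_eq_norm, norm_smul, abs_of_nonneg ht] using hK.dist_le_mul (x + t • v) x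
    have := real_inner_le_norm (f' (x + t • v) - f' x) v
    rw [inner_sub_left] at this
    nlinarith [norm_nonneg v]
  have hquad (t : ℝ) : HasDerivAt (fun s : ℝ => f x + s * ⟪f' x, v⟫ + K / 2 * s ^ 2 * ‖v‖ ^ 2)
      (⟪f' x, v⟫ + K * t * ‖v‖ ^ 2) t := by
    refine ((((hasDerivAt_id t).mul_const ⟪f' x, v⟫).const_add (f x)).add
      (((hasDerivAt_pow 2 t).const_mul (K / 2 : ℝ)).mul_const (‖v‖ ^ 2))).congr_deriv ?_
    simp only [Nat.cast_ofNat]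
    ring
  have := image_le_of_deriv_right_le_deriv_boundary (a := 0) (b := 1)
    (fun t _ => (hderiv t).continuousAt.continuousWithinAt) (fun t _ => (hderiv t).hasDerivWithinAt)
    (by simp) (fun t _ => (hquad t).continuousAt.continuousWithinAt)
    (fun t _ => (hquad t).hasDerivWithinAt) (fun t ht => hbound t ht.1)
    (Set.right_mem_Icc.2 zero_le_one)
  simpa [v] using this

theorem ConvexOn.add_inner_add_sq_le_of_lipschitzWith (hconv : ConvexOn ℝ Set.univ f)
    (hf : ∀ x, HasGradientAt f (f' x) x) (hK : LipschitzWith K f') (hKpos : 0 < K) (x y : H) :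
    f x + ⟪f' x, y - x⟫ + 1 / (2 * K) * ‖f' y - f' x‖ ^ 2 ≤ f y := by
  set G := f' y - f' x
  -- `z` minimizes the quadratic upper bound at `y` of `f - ⟪f' x, ·⟫`, whose minimum is at `x`.
  set z := y - (K : ℝ)⁻¹ • G
  have hdesc := le_add_inner_add_sq_of_lipschitzWith hf hK y z
  have hconvex := hconv.add_inner_le_of_hasGradientAt (hf x) z
  have hzy : z - y = -((K : ℝ)⁻¹ • G) := by simp [z]
  have hzx : z - x = (y - x) + (z - y) := by abel
  have hinner : ⟪f' y, z - y⟫ - ⟪f' x, z - y⟫ = -(K : ℝ)⁻¹ * ‖G‖ ^ 2 := by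
    rw [← inner_sub_left, hzy, inner_neg_right, real_inner_smul_right, real_inner_self_eq_norm_sq]
    ring
  have hnorm : ‖z - y‖ ^ 2 = (K : ℝ)⁻¹ ^ 2 * ‖G‖ ^ 2 := by
    rw [hzy, norm_neg, norm_smul, norm_inv, NNReal.norm_eq, mul_pow]
  rw [hzx, inner_add_right] at hconvex
  rw [hnorm] at hdesc
  have : 1 / (2 * (K : ℝ)) * ‖G‖ ^ 2 =
      (K : ℝ)⁻¹ * ‖G‖ ^ 2 - K / 2 * ((K : ℝ)⁻¹ ^ 2 * ‖G‖ ^ 2) := by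
    field_simp; ring
  linarith

theorem apply_gradientStep_le (hf : ∀ x, HasGradientAt f (f' x) x) (hK : LipschitzWith K f')
    (η : ℝ) (x : H) :
    f (gradientStep f' η x) ≤ f x - η * (1 - K * η / 2) * ‖f' x‖ ^ 2 := by
  have h := le_add_inner_add_sq_of_lipschitzWith hf hK x (gradientStep f' η x)
  rw [gradientStep] at h ⊢
  rw [sub_sub_cancel_left, inner_neg_right, real_inner_smul_right,
    real_inner_self_eq_norm_sq, norm_neg, norm_smul, Real.norm_eq_abs, mul_pow, sq_abs] at h
  linarith

variable {m μ η : ℝ} (hf : ∀ x, HasGradientAt f (f' x) x) (hK : LipschitzWith K f')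
  (hm : ∀ x, m ≤ f x) (hpl : ∀ x, 2 * μ * (f x - m) ≤ ‖f' x‖ ^ 2)
include hf hK hpl

theorem gradientStep_sub_le_of_pl (hη : 0 ≤ η) (hηK : K * η ≤ 2) (x : H) :
    f (gradientStep f' η x) - m ≤ (1 - 2 * μ * (η * (1 - K * η / 2))) * (f x - m) := by
  have hc : 0 ≤ η * (1 - K * η / 2) := mul_nonneg hη (by linarith)
  have := mul_le_mul_of_nonneg_left (hpl x) hc
  linarith [apply_gradientStep_le hf hK η x]

include hm

theorem norm_gradientStep_sub_le_of_pl (hμ : 0 ≤ μ) (hη : 0 ≤ η) (hηK : K * η ≤ 2) (x : H) :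
    (1 - K * η / 2) * √(2 * μ) * ‖gradientStep f' η x - x‖ ≤
      2 * (√(f x - m) - √(f (gradientStep f' η x) - m)) := by
  have hdecrease := apply_gradientStep_le hf hK η x
  set w := gradientStep f' η x
  set c := η * (1 - K * η / 2)
  set g := ‖f' x‖
  set a := √(f x - m)
  set b := √(f w - m)
  set s := √(2 * μ)
  have hc : 0 ≤ c := mul_nonneg hη (by linarith)
  have hg : 0 ≤ g := norm_nonneg _
  have ha : 0 ≤ a := Real.sqrt_nonneg _
  have hb : 0 ≤ b := Real.sqrt_nonneg _
  have hs : 0 ≤ s := Real.sqrt_nonneg _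
  have hdesc : b ^ 2 + c * g ^ 2 ≤ a ^ 2 := by
    rw [Real.sq_sqrt (sub_nonneg.2 (hm x)), Real.sq_sqrt (sub_nonneg.2 (hm w))]
    linarith
  have hsa : s * a ≤ g := by
    refine (pow_le_pow_iff_left₀ (mul_nonneg hs ha) hg two_ne_zero).1 ?_
    rw [mul_pow, Real.sq_sqrt (by positivity), Real.sq_sqrt (sub_nonneg.2 (hm x))]
    exact hpl x
  have hba : b ≤ a := by nlinarith
  have hstep : ‖w - x‖ = η * g := by
    rw [show w - x = -(η • f' x) by simp [w, gradientStep], norm_neg, norm_smul,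
      Real.norm_of_nonneg hη]
  have key : g * (c * s * g) ≤ g * (2 * (a - b)) :=
    calc g * (c * s * g) = s * (c * g ^ 2) := by ring
      _ ≤ s * (a ^ 2 - b ^ 2) := by gcongr s * ?_; linarith
      _ = s * ((a - b) * (a + b)) := by ring
      _ ≤ s * ((a - b) * (2 * a)) := by gcongr s * ((a - b) * ?_); linarith
      _ = 2 * (a - b) * (s * a) := by ring
      _ ≤ 2 * (a - b) * g := by gcongr
      _ = g * (2 * (a - b)) := by ring
  rcases hg.eq_or_lt with hg0 | hgpos
  · rw [hstep, ← hg0]; linarith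
  · calc (1 - K * η / 2) * s * ‖w - x‖ = c * s * g := by rw [hstep]; ring
      _ ≤ 2 * (a - b) := le_of_mul_le_mul_left key hgpos

theorem tendsto_iterate_gradientStep_sub_of_pl (hμ : 0 < μ) (hη : 0 < η) (hηK : K * η < 2)
    (x : H) : Tendsto (fun n => f ((gradientStep f' η)^[n] x) - m) atTop (𝓝 0) := by
  have hc : 0 < η * (1 - K * η / 2) := mul_pos hη (by linarith)
  refine Summable.tendsto_atTop_zero <|
    summable_of_ratio_norm_eventually_le (r := 1 - 2 * μ * (η * (1 - K * η / 2)))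
      (by nlinarith) (Eventually.of_forall fun n => ?_)
  rw [Function.iterate_succ_apply', Real.norm_of_nonneg (sub_nonneg.2 (hm _)),
    Real.norm_of_nonneg (sub_nonneg.2 (hm _))]
  exact gradientStep_sub_le_of_pl hf hK hpl hη.le hηK.le _

theorem exists_min_dist_le_of_pl (hμ : 0 < μ) (hη : 0 < η) (hηK : K * η < 2) (x : H) :
    ∃ p, f p = m ∧ (1 - K * η / 2) * √(2 * μ) * dist x p ≤ 2 * √(f x - m) := by
  set C := (1 - K * η / 2) * √(2 * μ)
  have hC : 0 < C := mul_pos (by linarith) (by positivity)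
  have hgap := tendsto_iterate_gradientStep_sub_of_pl hf hK hm hpl hμ hη hηK x
  obtain ⟨p, hp, hdist⟩ := exists_tendsto_dist_le_of_dist_le_sub
    (x := fun n => (gradientStep f' η)^[n] x)
    (u := fun n => 2 * √(f ((gradientStep f' η)^[n] x) - m) / C)
    (by simpa using ((Real.continuous_sqrt.tendsto 0).comp hgap).const_mul 2 |>.div_const C)
    (fun n => by
      rw [← sub_div, ← mul_sub, le_div_iff₀ hC, dist_comm, dist_eq_norm, mul_comm,
        Function.iterate_succ_apply']
      exact norm_gradientStep_sub_le_of_pl hf hK hm hpl hμ.le hη.le hηK.le _)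
  have hfp : f p = m := by
    refine tendsto_nhds_unique ((hf p).differentiableAt.continuousAt.tendsto.comp hp) ?_
    simpa [Function.comp_def] using hgap.add_const m
  refine ⟨p, hfp, ?_⟩
  rw [mul_comm, ← le_div_iff₀ hC]
  simpa using hdist

theorem quadratic_growth_of_pl (hμ : 0 < μ) (x : H) :
    μ / 2 * infDist x {p | ∀ y, f p ≤ f y} ^ 2 ≤ f x - m := by
  set d := infDist x {p | ∀ y, f p ≤ f y}
  have hbound : ∀ η : ℝ, 0 < η → K * η < 2 →
      (1 - K * η / 2) * √(2 * μ) * d ≤ 2 * √(f x - m) := by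
    intro η hη hηK
    obtain ⟨p, hfp, hp⟩ := exists_min_dist_le_of_pl hf hK hm hpl hμ hη hηK x
    have hpmin : p ∈ {p | ∀ y, f p ≤ f y} := fun y => hfp ▸ hm y
    exact (mul_le_mul_of_nonneg_left (infDist_le_dist_of_mem hpmin)
      (mul_nonneg (by linarith) (Real.sqrt_nonneg _))).trans hp
  -- The factor `1 - Kη/2` lost to the step size disappears as `η → 0`.
  have hlim : Tendsto (fun η : ℝ => (1 - K * η / 2) * √(2 * μ) * d) (𝓝[>] 0)
      (𝓝 (√(2 * μ) * d)) := by
    have : Continuous fun η : ℝ => (1 - K * η / 2) * √(2 * μ) * d := by fun_prop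
    simpa using (this.tendsto 0).mono_left nhdsWithin_le_nhds
  have hsmall : ∀ᶠ η in 𝓝[>] (0 : ℝ), (K : ℝ) * η < 2 :=
    nhdsWithin_le_nhds <| (continuous_const_mul (K : ℝ)).continuousAt.eventually_lt
      continuousAt_const (by simp)
  have hsd : √(2 * μ) * d ≤ 2 * √(f x - m) :=
    le_of_tendsto hlim <| by
      filter_upwards [self_mem_nhdsWithin, hsmall] with η hη hηK using hbound η hη hηK
  have := pow_le_pow_left₀ (mul_nonneg (Real.sqrt_nonneg _) infDist_nonneg) hsd 2
  rw [mul_pow, mul_pow, Real.sq_sqrt (by positivity), Real.sq_sqrt (sub_nonneg.2 (hm x))] at this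
  linarith

theorem error_bound_of_pl (hμ : 0 < μ) (x : H) :
    μ * infDist x {p | ∀ y, f p ≤ f y} ≤ ‖f' x‖ := by
  refine (pow_le_pow_iff_left₀ (mul_nonneg hμ.le infDist_nonneg) (norm_nonneg _)
    two_ne_zero).1 ?_
  have := mul_le_mul_of_nonneg_left (quadratic_growth_of_pl hf hK hm hpl hμ x)
    (by positivity : 0 ≤ 2 * μ)
  nlinarith [hpl x]

end

/-- For convex functions with Lipschitz gradient, PL implies quasi-strong convexity
with parameter μ²/L. -/
theorem pl_implies_qsc {H : Type*} [NormedAddCommGroup H] [InnerProductSpace ℝ H]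
    [CompleteSpace H]
    (F : H → ℝ) (F' : H → H) (hdiff : ∀ x, HasGradientAt F (F' x) x)
    (hconv : ConvexOn ℝ Set.univ F)
    (L : ℝ) (hL : 0 < L) (hlip : LipschitzWith (Real.toNNReal L) F')
    (Xs : Set H) (hXs : Xs = {x | ∀ y, F x ≤ F y}) (hne : Xs.Nonempty)
    (Fstar : ℝ) (hFstar : ∀ x ∈ Xs, F x = Fstar)
    (μ : ℝ) (hμ : 0 < μ)
    (hpl : ∀ x, F x - Fstar ≤ 1 / (2 * μ) * ‖F' x‖ ^ 2) :
    ∀ x xb, xb ∈ Xs → (∀ y ∈ Xs, ‖x - xb‖ ≤ ‖x - y‖) →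
      F x + ⟪F' x, xb - x⟫ + μ ^ 2 / (2 * L) * ‖x - xb‖ ^ 2 ≤ F xb := by
  intro x xb hxb hproj
  have hmin : ∀ y, F xb ≤ F y := by rw [hXs] at hxb; exact hxb
  have hFstar_le : ∀ y, Fstar ≤ F y := hFstar xb hxb ▸ hmin
  have hpl' : ∀ y, 2 * μ * (F y - Fstar) ≤ ‖F' y‖ ^ 2 := fun y => by
    have := hpl y
    rw [one_div_mul_eq_div, le_div_iff₀ (by positivity)] at this
    linarith
  have hgrad : F' xb = 0 :=
    IsLocalMin.hasGradientAt_eq_zero (Eventually.of_forall hmin) (hdiff xb)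
  have hdist : ‖x - xb‖ ≤ infDist x Xs :=
    (le_infDist hne).2 fun y hy => by rw [dist_eq_norm]; exact hproj y hy
  have heb := error_bound_of_pl hdiff hlip hFstar_le hpl' hμ x
  rw [← hXs] at heb
  have hbh := hconv.add_inner_add_sq_le_of_lipschitzWith hdiff hlip (Real.toNNReal_pos.2 hL) x xb
  rw [hgrad, zero_sub, norm_neg, Real.coe_toNNReal L hL.le] at hbh
  have : μ ^ 2 * ‖x - xb‖ ^ 2 ≤ ‖F' x‖ ^ 2 := by
    rw [← mul_pow]
    exact pow_le_pow_left₀ (by positivity) ((mul_le_mul_of_nonneg_left hdist hμ.le).trans heb) 2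
  calc F x + ⟪F' x, xb - x⟫ + μ ^ 2 / (2 * L) * ‖x - xb‖ ^ 2
      = F x + ⟪F' x, xb - x⟫ + 1 / (2 * L) * (μ ^ 2 * ‖x - xb‖ ^ 2) := by ring
    _ ≤ F x + ⟪F' x, xb - x⟫ + 1 / (2 * L) * ‖F' x‖ ^ 2 := by gcongr
    _ ≤ F xb := hbh
end

section
/- If F : H → ℝ is differentiable with L-Lipschitz gradient, X* = argmin F ≠ ∅, and F satisfies the error-bound condition η·dist(x, X*) ≤ ‖∇F(x)‖ for all x ∈ H with some η > 0, then F satisfies the Polyak-Łojasiewicz condition with parameter μ = η²/L. -/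
/-!
Minimizers are critical points, so the descent lemma based at a minimizer `z` gives
`F x - F* ≤ (L/2) ‖x - z‖²`. Letting `z` approach the infimal distance yields quadratic growth
`F x - F* ≤ (L/2) dist(x, X*)²`, and the error bound replaces `dist(x, X*)` by `‖∇F x‖ / η`.
-/

open InnerProductSpace Metric Filter Topology
open scoped NNReal

theorem image_le_add_fderiv_add_sq_of_lipschitzWith {E : Type*} [NormedAddCommGroup E]
    [NormedSpace ℝ E] {f : E → ℝ} {f' : E → StrongDual ℝ E} {K : ℝ≥0}
    (hf : ∀ x, HasFDerivAt f (f' x) x) (hf' : LipschitzWith K f') (x y : E) :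
    f y ≤ f x + f' x (y - x) + K / 2 * ‖y - x‖ ^ 2 := by
  set v := y - x
  -- `g 1 ≤ g 0` is the claim; `g` is antitone on `[0, 1]` since `f'` is `K`-Lipschitz.
  set g : ℝ → ℝ := fun t ↦ f (x + t • v) - t * f' x v - K / 2 * t ^ 2 * ‖v‖ ^ 2
  have hg : ∀ t, HasDerivAt g (f' (x + t • v) v - f' x v - K * t * ‖v‖ ^ 2) t := by
    intro t
    have hline : HasDerivAt (fun t : ℝ ↦ x + t • v) v t := by
      simpa using ((hasDerivAt_id t).smul_const v).const_add x
    refine ((((hf _).comp_hasDerivAt t hline).sub ((hasDerivAt_id t).mul_const (f' x v))).sub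
      (((hasDerivAt_pow 2 t).const_mul (K / 2 : ℝ)).mul_const (‖v‖ ^ 2))).congr_deriv ?_
    simp only [Nat.cast_ofNat]
    ring
  have hg_nonpos : ∀ t, 0 ≤ t → f' (x + t • v) v - f' x v ≤ K * t * ‖v‖ ^ 2 := by
    intro t ht
    have hlip : ‖f' (x + t • v) - f' x‖ ≤ K * (t * ‖v‖) := by
      simpa [norm_smul, abs_of_nonneg ht] using hf'.norm_sub_le (x + t • v) x
    calc f' (x + t • v) v - f' x v = (f' (x + t • v) - f' x) v := rfl
      _ ≤ ‖f' (x + t • v) - f' x‖ * ‖v‖ :=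
        (Real.le_norm_self _).trans (ContinuousLinearMap.le_opNorm _ _)
      _ ≤ K * (t * ‖v‖) * ‖v‖ := by gcongr
      _ = K * t * ‖v‖ ^ 2 := by ring
  have hanti : AntitoneOn g (Set.Icc 0 1) := by
    refine antitoneOn_of_hasDerivWithinAt_nonpos (convex_Icc 0 1)
      (continuous_iff_continuousAt.2 fun t ↦ (hg t).continuousAt).continuousOn
      (fun t _ ↦ (hg t).hasDerivWithinAt) ?_
    intro t ht
    exact sub_nonpos.2 (hg_nonpos t (interior_subset ht).1)
  have := hanti (by simp) (by simp) zero_le_one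
  have hx1 : x + (1 : ℝ) • v = y := by simp [v]
  simp only [g, hx1, zero_smul, add_zero] at this
  linarith

theorem le_mul_infDist_sq {α : Type*} [PseudoMetricSpace α] {s : Set α} (hs : s.Nonempty)
    {x : α} {a C : ℝ} (hC : 0 ≤ C) (h : ∀ z ∈ s, a ≤ C * dist x z ^ 2) :
    a ≤ C * infDist x s ^ 2 := by
  have hlim : Tendsto (fun t : ℝ ↦ C * t ^ 2) (𝓝[>] infDist x s) (𝓝 (C * infDist x s ^ 2)) :=
    (continuous_const.mul (continuous_pow 2)).continuousWithinAt
  refine ge_of_tendsto hlim (eventually_nhdsWithin_of_forall fun t ht ↦ ?_)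
  obtain ⟨z, hz, hzt⟩ := (infDist_lt_iff hs).1 ht
  calc a ≤ C * dist x z ^ 2 := h z hz
    _ ≤ C * t ^ 2 := by gcongr

theorem HasGradientAt.eq_zero_of_forall_le {H : Type*} [NormedAddCommGroup H]
    [InnerProductSpace ℝ H] [CompleteSpace H] {F : H → ℝ} {g z : H} (hF : HasGradientAt F g z)
    (hz : ∀ y, F z ≤ F y) : g = 0 :=
  (toDual ℝ H).map_eq_zero_iff.1 <|
    IsLocalMin.hasFDerivAt_eq_zero (Eventually.of_forall hz) hF.hasFDerivAt

/-- The error-bound condition implies the Polyak-Łojasiewicz condition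
with parameter μ = η²/L. -/
theorem eb_implies_pl {H : Type*} [NormedAddCommGroup H] [InnerProductSpace ℝ H]
    [CompleteSpace H]
    (F : H → ℝ) (F' : H → H) (hdiff : ∀ x, HasGradientAt F (F' x) x)
    (L : ℝ) (hL : 0 < L) (hlip : LipschitzWith (Real.toNNReal L) F')
    (Xs : Set H) (hXs : Xs = {x | ∀ y, F x ≤ F y}) (hne : Xs.Nonempty)
    (Fstar : ℝ) (hFstar : ∀ x ∈ Xs, F x = Fstar)
    (η : ℝ) (hη : 0 < η)
    (heb : ∀ x, η * Metric.infDist x Xs ≤ ‖F' x‖) :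
    ∀ x, F x - Fstar ≤ 1 / (2 * (η ^ 2 / L)) * ‖F' x‖ ^ 2 := by
  intro x
  have hdual_lip : LipschitzWith L.toNNReal fun x ↦ toDual ℝ H (F' x) := by
    have h := (toDual ℝ H).lipschitz.comp hlip
    rwa [one_mul] at h
  have hgrowth : ∀ z ∈ Xs, F x - Fstar ≤ L / 2 * dist x z ^ 2 := by
    intro z hz
    have hmin : ∀ y, F z ≤ F y := by rw [hXs] at hz; exact hz
    have hdescent := image_le_add_fderiv_add_sq_of_lipschitzWith
      (fun x ↦ (hdiff x).hasFDerivAt) hdual_lip z x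
    rw [(hdiff z).eq_zero_of_forall_le hmin, Real.coe_toNNReal L hL.le] at hdescent
    simp only [map_zero, zero_apply, add_zero] at hdescent
    rw [dist_eq_norm, ← hFstar z hz]
    linarith
  have hdist : infDist x Xs ≤ ‖F' x‖ / η := (le_div_iff₀' hη).2 (heb x)
  calc F x - Fstar ≤ L / 2 * infDist x Xs ^ 2 := le_mul_infDist_sq hne (by positivity) hgrowth
    _ ≤ L / 2 * (‖F' x‖ / η) ^ 2 := by gcongr; exact infDist_nonneg
    _ = 1 / (2 * (η ^ 2 / L)) * ‖F' x‖ ^ 2 := by field_simp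
end

section
/- Let F : H → (-∞, +∞] be convex, proper, lower semicontinuous with argmin F ≠ ∅ on a real Hilbert space H, and let λ > 0. If F satisfies the nonsmooth Polyak-Łojasiewicz condition F(x) - F* ≤ (1/(2μ)) dist(0, ∂F(x))² for all x, then the Moreau envelope F_λ satisfies the (smooth) Polyak-Łojasiewicz condition with parameter μ/(λμ + 1): F_λ(x) - min F_λ ≤ ((λμ+1)/(2μ))‖∇F_λ(x)‖² for all x ∈ H. -/
open RealInnerProductSpace

/-- The convex subdifferential of an extended-real-valued function. -/
def ESubdiff {H : Type*} [NormedAddCommGroup H] [InnerProductSpace ℝ H]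
    (F : H → EReal) (x : H) : Set H :=
  {v | ∀ y, F x + ((⟪v, y - x⟫ : ℝ) : EReal) ≤ F y}

/-- If a convex, proper, lsc function F satisfies the nonsmooth PL condition with
parameter μ, then its Moreau envelope F_λ satisfies the smooth PL condition with
parameter μ/(λμ+1). -/
theorem moreau_pl {H : Type*} [NormedAddCommGroup H] [InnerProductSpace ℝ H]
    [CompleteSpace H]
    (F : H → EReal) (hconv : ∀ x y : H, ∀ a b : ℝ, 0 ≤ a → 0 ≤ b → a + b = 1 →
      F (a • x + b • y) ≤ (a : EReal) * F x + (b : EReal) * F y)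
    (hlsc : LowerSemicontinuous F)
    (hproper : (∀ x, F x ≠ ⊥) ∧ ∃ x, F x ≠ ⊤)
    (Fstar : ℝ) (hFstar : ∀ x, (Fstar : EReal) ≤ F x) (hmin : ∃ x, F x = (Fstar : EReal))
    (lam : ℝ) (hlam : 0 < lam)
    (μ : ℝ) (hμ : 0 < μ)
    (Fl : H → ℝ) (prox : H → H)
    (hFl : ∀ x, (Fl x : EReal) = F (prox x) + ((‖prox x - x‖ ^ 2 / (2 * lam) : ℝ) : EReal))
    (hproxmin : ∀ x y, (Fl x : EReal) ≤ F y + ((‖y - x‖ ^ 2 / (2 * lam) : ℝ) : EReal))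
    (Fl' : H → H) (hgrad : ∀ x, HasGradientAt Fl (Fl' x) x)
    (hgrad_eq : ∀ x, Fl' x = (1 / lam) • (x - prox x))
    (hsub : ∀ x, (1 / lam) • (x - prox x) ∈ ESubdiff F (prox x))
    (hnspl : ∀ x, ∀ v ∈ ESubdiff F x, F x ≤ (Fstar : EReal) + ((1 / (2 * μ) * ‖v‖ ^ 2 : ℝ) : EReal)) :
    ∀ x, Fl x - Fstar ≤ (lam * μ + 1) / (2 * μ) * ‖Fl' x‖ ^ 2 := by
  intro x
  have hvs := hsub x
  have hFlx := hFl x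
  have hFp_ne_top : F (prox x) ≠ ⊤ := by
    intro h
    rw [h] at hFlx
    simp [EReal.top_add_coe] at hFlx
  have hFp_ne_bot := hproper.1 (prox x)
  lift F (prox x) to ℝ using ⟨hFp_ne_top, hFp_ne_bot⟩ with r hr
  have hpl := hnspl (prox x) _ hvs
  rw [← hr] at hpl
  rw [← EReal.coe_add, EReal.coe_eq_coe_iff] at hFlx
  rw [← EReal.coe_add, EReal.coe_le_coe_iff] at hpl
  have hnorm : ‖(1 / lam) • (x - prox x)‖ = (1 / lam) * ‖x - prox x‖ := by
    rw [norm_smul, Real.norm_eq_abs, abs_of_pos (by positivity)]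
  rw [hgrad_eq x, hnorm]
  rw [hnorm] at hpl
  rw [norm_sub_rev] at hFlx
  set n := ‖x - prox x‖ with hn
  have hn0 : 0 ≤ n := norm_nonneg _
  rw [hFlx]
  have h2 : (1 / lam * n) ^ 2 = n ^ 2 / lam ^ 2 := by field_simp
  rw [h2]
  rw [h2] at hpl
  have key : r + n ^ 2 / (2 * lam) - Fstar ≤
      (lam * μ + 1) / (2 * μ) * (n ^ 2 / lam ^ 2) := by
    have heq : (lam * μ + 1) / (2 * μ) * (n ^ 2 / lam ^ 2)
        = 1 / (2 * μ) * (n ^ 2 / lam ^ 2) + n ^ 2 / (2 * lam) := by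
      field_simp; ring
    rw [heq]
    linarith
  exact key
end

section
/- Let F : H → (-∞, +∞] be convex, proper, lower semicontinuous with argmin F ≠ ∅ and let λ > 0. If the Moreau envelope F_λ satisfies the Polyak-Łojasiewicz condition with parameter μ > 0, then F satisfies the quadratic growth condition (μ/2)·dist(x, argmin F)² ≤ F(x) - F* for all x ∈ H. -/
/-!
`F_λ - ‖·‖²/(2λ)` is an infimum of affine functions, hence concave, so the differentiable
envelope `F_λ` satisfies the descent lemma with constant `1/λ`. Along gradient descent with a
step `h < 2λ`, PL makes `√(F_λ - F*)` drop by at least `(1 - h/(2λ)) √(2μ) / 2` times the length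
of each step, and it decays geometrically; so the iterates converge to a zero `z` of `F_λ - F*`,
at distance at most `2 √(F_λ x - F*) / ((1 - h/(2λ)) √(2μ))` from `x`. Lower semicontinuity
puts `z` in `argmin F`, and letting `h → 0` gives
`μ/2 · dist(x, argmin F)² ≤ F_λ x - F* ≤ F x - F*`.
-/

open Set Metric Filter Topology

theorem le_of_forall_mem_Ioo_mul_le {x y : ℝ} (h : ∀ c ∈ Ioo (0 : ℝ) 1, c * x ≤ y) : x ≤ y := by
  refine le_of_tendsto (f := fun c ↦ c * x) (x := 𝓝[<] 1) ?_ ?_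
  · exact ((continuous_id.mul continuous_const).tendsto' 1 x (one_mul x)).mono_left
      nhdsWithin_le_nhds
  · filter_upwards [Ioo_mem_nhdsLT zero_lt_one] with c hc using h c hc

theorem dist_le_sub_of_dist_succ_le_sub {α : Type*} [PseudoMetricSpace α] {u : ℕ → α}
    {T : ℕ → ℝ} (h : ∀ n, dist (u n) (u (n + 1)) ≤ T n - T (n + 1)) (n : ℕ) :
    dist (u 0) (u n) ≤ T 0 - T n := by
  calc dist (u 0) (u n) ≤ ∑ i ∈ Finset.range n, dist (u i) (u (i + 1)) := dist_le_range_sum_dist u n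
    _ ≤ ∑ i ∈ Finset.range n, (T i - T (i + 1)) := Finset.sum_le_sum fun i _ ↦ h i
    _ = T 0 - T n := Finset.sum_range_sub' T n

theorem sqrt_mul_le_norm_of_pl {α E : Type*} [NormedAddCommGroup E] {f : α → ℝ} {f' : α → E}
    {fstar μ : ℝ} (hpl : ∀ x, f x - fstar ≤ 1 / (2 * μ) * ‖f' x‖ ^ 2) (hμ : 0 < μ) (p : α) :
    √(2 * μ) * √(f p - fstar) ≤ ‖f' p‖ := by
  rw [← Real.sqrt_mul (by positivity), ← Real.sqrt_sq (norm_nonneg (f' p))]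
  refine Real.sqrt_le_sqrt ?_
  have := hpl p
  rw [div_mul_eq_mul_div, one_mul, le_div_iff₀ (by positivity)] at this
  linarith

def gradientDescent {E : Type*} [AddCommGroup E] [Module ℝ E] (f' : E → E) (h : ℝ) (x : E) :
    ℕ → E
  | 0 => x
  | n + 1 => gradientDescent f' h x n - h • f' (gradientDescent f' h x n)

section PolyakLojasiewicz

variable {H : Type*} [NormedAddCommGroup H] [InnerProductSpace ℝ H]
  {f : H → ℝ} {f' : H → H} {fstar L μ h : ℝ}

theorem apply_sub_smul_le
    (hdesc : ∀ x v, f (x + v) ≤ f x + inner ℝ (f' x) v + L / 2 * ‖v‖ ^ 2) (p : H) :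
    f (p - h • f' p) ≤ f p - h * (1 - L * h / 2) * ‖f' p‖ ^ 2 := by
  have := hdesc p (-(h • f' p))
  rw [← sub_eq_add_neg, inner_neg_right, real_inner_smul_right, real_inner_self_eq_norm_sq,
    norm_neg, norm_smul, Real.norm_eq_abs, mul_pow, sq_abs] at this
  linarith

theorem mul_norm_smul_le_sqrt_sub_sqrt
    (hdesc : ∀ x v, f (x + v) ≤ f x + inner ℝ (f' x) v + L / 2 * ‖v‖ ^ 2)
    (hpl : ∀ x, f x - fstar ≤ 1 / (2 * μ) * ‖f' x‖ ^ 2) (hlb : ∀ x, fstar ≤ f x)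
    (hμ : 0 < μ) (hh : 0 ≤ h) (hc : 0 ≤ 1 - L * h / 2) (p : H) :
    √(2 * μ) * (1 - L * h / 2) * ‖h • f' p‖ ≤
      2 * (√(f p - fstar) - √(f (p - h • f' p) - fstar)) := by
  set G := ‖f' p‖
  set a := √(f p - fstar)
  set b := √(f (p - h • f' p) - fstar)
  have ha : a ^ 2 = f p - fstar := Real.sq_sqrt (sub_nonneg.2 (hlb p))
  have hb : b ^ 2 = f (p - h • f' p) - fstar := Real.sq_sqrt (sub_nonneg.2 (hlb _))
  have hdecrease : h * (1 - L * h / 2) * G ^ 2 ≤ a ^ 2 - b ^ 2 := by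
    linarith [apply_sub_smul_le (h := h) hdesc p]
  have hba : b ≤ a := by
    refine Real.sqrt_le_sqrt ?_
    nlinarith [mul_nonneg (mul_nonneg hh hc) (sq_nonneg G)]
  have hsa : √(2 * μ) * a ≤ G := sqrt_mul_le_norm_of_pl hpl hμ p
  rw [norm_smul, Real.norm_of_nonneg hh]
  rcases (norm_nonneg (f' p)).eq_or_lt with hG | hG
  · rw [← hG]; linarith
  refine le_of_mul_le_mul_right ?_ hG
  calc √(2 * μ) * (1 - L * h / 2) * (h * G) * G
      = √(2 * μ) * (h * (1 - L * h / 2) * G ^ 2) := by ring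
    _ ≤ √(2 * μ) * ((a - b) * (2 * a)) := by
      refine mul_le_mul_of_nonneg_left ?_ (Real.sqrt_nonneg _)
      nlinarith [Real.sqrt_nonneg (f (p - h • f' p) - fstar)]
    _ = 2 * (a - b) * (√(2 * μ) * a) := by ring
    _ ≤ 2 * (a - b) * G := mul_le_mul_of_nonneg_left hsa (by linarith)

theorem sqrt_apply_sub_smul_le
    (hdesc : ∀ x v, f (x + v) ≤ f x + inner ℝ (f' x) v + L / 2 * ‖v‖ ^ 2)
    (hpl : ∀ x, f x - fstar ≤ 1 / (2 * μ) * ‖f' x‖ ^ 2) (hlb : ∀ x, fstar ≤ f x)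
    (hμ : 0 < μ) (hh : 0 ≤ h) (hc : 0 ≤ 1 - L * h / 2) (p : H) :
    √(f (p - h • f' p) - fstar) ≤ (1 - μ * (1 - L * h / 2) * h) * √(f p - fstar) := by
  have hstep := mul_norm_smul_le_sqrt_sub_sqrt hdesc hpl hlb hμ hh hc p
  rw [norm_smul, Real.norm_of_nonneg hh] at hstep
  have hsa := mul_le_mul_of_nonneg_left (sqrt_mul_le_norm_of_pl hpl hμ p)
    (by positivity : 0 ≤ √(2 * μ) * (1 - L * h / 2) * h)
  have hs : √(2 * μ) * √(2 * μ) = 2 * μ := Real.mul_self_sqrt (by positivity)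
  linear_combination (hstep + hsa) / 2 - ((1 - L * h / 2) * h * √(f p - fstar) / 2) * hs

theorem exists_apply_eq_mul_dist_le [CompleteSpace H] (hf : Continuous f)
    (hdesc : ∀ x v, f (x + v) ≤ f x + inner ℝ (f' x) v + L / 2 * ‖v‖ ^ 2)
    (hpl : ∀ x, f x - fstar ≤ 1 / (2 * μ) * ‖f' x‖ ^ 2) (hlb : ∀ x, fstar ≤ f x)
    (hμ : 0 < μ) (hh : 0 < h) (hc : 0 < 1 - L * h / 2) (x : H) :
    ∃ z, f z = fstar ∧ √(2 * μ) * (1 - L * h / 2) * dist x z ≤ 2 * √(f x - fstar) := by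
  set u := gradientDescent f' h x
  have hu : ∀ n, u (n + 1) = u n - h • f' (u n) := fun n ↦ rfl
  set κ := √(2 * μ) * (1 - L * h / 2)
  have hκ : 0 < κ := by positivity
  set T : ℕ → ℝ := fun n ↦ √(f (u n) - fstar)
  have hT : ∀ n, 0 ≤ T n := fun n ↦ Real.sqrt_nonneg _
  have hstep : ∀ n, dist (u n) (u (n + 1)) ≤ 2 / κ * T n - 2 / κ * T (n + 1) := fun n ↦ by
    have := mul_norm_smul_le_sqrt_sub_sqrt hdesc hpl hlb hμ hh.le hc.le (u n)
    change κ * _ ≤ 2 * (T n - T (n + 1)) at this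
    rw [dist_eq_norm, hu, sub_sub_cancel, ← mul_sub, div_mul_eq_mul_div, le_div_iff₀ hκ]
    linarith
  set q := max (1 - μ * (1 - L * h / 2) * h) 0
  have hq : q < 1 := max_lt (by nlinarith [mul_pos (mul_pos hμ hc) hh]) zero_lt_one
  have hdecay : ∀ n, T n ≤ q ^ n * T 0 := fun n ↦ by
    induction n with
    | zero => simp
    | succ n ih =>
      calc T (n + 1) ≤ q * T n := by
            have := sqrt_apply_sub_smul_le hdesc hpl hlb hμ hh.le hc.le (u n)
            change T (n + 1) ≤ _ * T n at this
            exact this.trans (mul_le_mul_of_nonneg_right (le_max_left _ _) (hT n))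
        _ ≤ q * (q ^ n * T 0) := mul_le_mul_of_nonneg_left ih (le_max_right _ _)
        _ = q ^ (n + 1) * T 0 := by ring
  have hT0 : Tendsto T atTop (𝓝 0) :=
    squeeze_zero hT hdecay (by
      simpa using (tendsto_pow_atTop_nhds_zero_of_lt_one (le_max_right _ _) hq).mul_const (T 0))
  obtain ⟨z, hz⟩ := cauchySeq_tendsto_of_complete <|
    cauchySeq_of_le_geometric q (2 / κ * T 0) hq fun n ↦ (hstep n).trans <|
      (sub_le_self _ (mul_nonneg (by positivity) (hT _))).trans <|
        (mul_le_mul_of_nonneg_left (hdecay n) (by positivity)).trans_eq (by ring)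
  refine ⟨z, ?_, ?_⟩
  · have hfu : Tendsto (fun n ↦ f (u n)) atTop (𝓝 fstar) := by
      have := (hT0.pow 2).add_const fstar
      simp only [T, Real.sq_sqrt (sub_nonneg.2 (hlb _)), sub_add_cancel] at this
      simpa using this
    exact tendsto_nhds_unique ((hf.tendsto z).comp hz) hfu
  · have hdist : dist x z ≤ 2 / κ * T 0 :=
      le_of_tendsto (tendsto_const_nhds.dist hz) <| Eventually.of_forall fun n ↦
        (dist_le_sub_of_dist_succ_le_sub hstep n).trans (sub_le_self _ (by positivity))
    rw [div_mul_eq_mul_div, le_div_iff₀ hκ] at hdist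
    change κ * dist x z ≤ 2 * T 0
    linarith

theorem mul_infDist_sq_le_of_pl [CompleteSpace H] (hf : Continuous f) (hL : 0 < L)
    (hdesc : ∀ x v, f (x + v) ≤ f x + inner ℝ (f' x) v + L / 2 * ‖v‖ ^ 2)
    (hpl : ∀ x, f x - fstar ≤ 1 / (2 * μ) * ‖f' x‖ ^ 2) (hlb : ∀ x, fstar ≤ f x)
    (hμ : 0 < μ) {S : Set H} (hS : {z | f z = fstar} ⊆ S) (x : H) :
    μ / 2 * infDist x S ^ 2 ≤ f x - fstar := by
  have key : √(2 * μ) * infDist x S ≤ 2 * √(f x - fstar) :=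
    le_of_forall_mem_Ioo_mul_le fun c ⟨hc0, hc1⟩ ↦ by
      have hstep : 1 - L * (2 * (1 - c) / L) / 2 = c := by field_simp; ring
      obtain ⟨z, hz, hdist⟩ := exists_apply_eq_mul_dist_le (h := 2 * (1 - c) / L) hf hdesc hpl
        hlb hμ (div_pos (by linarith) hL) (hstep.symm ▸ hc0) x
      rw [hstep] at hdist
      calc c * (√(2 * μ) * infDist x S) ≤ √(2 * μ) * c * dist x z := by
            rw [mul_left_comm, ← mul_assoc]
            exact mul_le_mul_of_nonneg_left (infDist_le_dist_of_mem (hS hz))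
              (mul_nonneg (Real.sqrt_nonneg _) hc0.le)
        _ ≤ 2 * √(f x - fstar) := hdist
  have := pow_le_pow_left₀ (mul_nonneg (Real.sqrt_nonneg _) infDist_nonneg) key 2
  rw [mul_pow, mul_pow, Real.sq_sqrt (by positivity), Real.sq_sqrt (sub_nonneg.2 (hlb x))] at this
  linarith

end PolyakLojasiewicz

theorem ConcaveOn.le_add_of_hasFDerivAt {E : Type*} [NormedAddCommGroup E] [NormedSpace ℝ E]
    {g : E → ℝ} {g' : E →L[ℝ] ℝ} {x : E} (hg : ConcaveOn ℝ univ g) (hd : HasFDerivAt g g' x)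
    (v : E) : g (x + v) ≤ g x + g' v := by
  have hline : HasDerivAt (AffineMap.lineMap x (x + v) : ℝ → E) v 0 := by
    simpa using AffineMap.hasDerivAt_lineMap (a := x) (b := x + v) (x := (0 : ℝ))
  have hslope := (hg.comp_affineMap (AffineMap.lineMap x (x + v))).slope_le_of_hasDerivAt
    (mem_univ 0) (mem_univ 1) zero_lt_one (hd.comp_hasDerivAt_of_eq 0 hline (by simp))
  simp only [slope_def_field, Function.comp_apply, AffineMap.lineMap_apply_zero,
    AffineMap.lineMap_apply_one] at hslope
  linarith

def IsMoreauEnvelope {H : Type*} [NormedAddCommGroup H] (F : H → EReal) (lam : ℝ)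
    (Fl : H → ℝ) : Prop :=
  ∀ x, (Fl x : EReal) = ⨅ y, F y + ((‖y - x‖ ^ 2 / (2 * lam) : ℝ) : EReal)

namespace IsMoreauEnvelope

variable {H : Type*} [NormedAddCommGroup H] {F : H → EReal} {lam : ℝ} {Fl : H → ℝ}

theorem le_add (hFl : IsMoreauEnvelope F lam Fl) {y : H} {r : ℝ} (hy : F y = r) (x : H) :
    Fl x ≤ r + ‖y - x‖ ^ 2 / (2 * lam) := by
  have := hy ▸ hFl x ▸ iInf_le (fun y ↦ F y + ((‖y - x‖ ^ 2 / (2 * lam) : ℝ) : EReal)) y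
  exact_mod_cast this

theorem ne_bot (hFl : IsMoreauEnvelope F lam Fl) (y : H) : F y ≠ ⊥ := by
  intro hy
  have := hFl y ▸ iInf_le (fun z ↦ F z + ((‖z - y‖ ^ 2 / (2 * lam) : ℝ) : EReal)) y
  simp [hy] at this

theorem le_of_forall_le (hFl : IsMoreauEnvelope F lam Fl) {x : H} {c : ℝ}
    (h : ∀ y (r : ℝ), F y = r → c ≤ r + ‖y - x‖ ^ 2 / (2 * lam)) : c ≤ Fl x := by
  suffices (c : EReal) ≤ Fl x by exact_mod_cast this
  rw [hFl x]
  refine le_iInf fun y ↦ ?_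
  induction hy : F y with
  | bot => exact absurd hy (hFl.ne_bot y)
  | top => simp
  | coe r => exact_mod_cast h y r hy

theorem coe_le (hFl : IsMoreauEnvelope F lam Fl) (x : H) : (Fl x : EReal) ≤ F x := by
  have := hFl x ▸ iInf_le (fun y ↦ F y + ((‖y - x‖ ^ 2 / (2 * lam) : ℝ) : EReal)) x
  simpa using this

theorem le_apply (hFl : IsMoreauEnvelope F lam Fl) (hlam : 0 ≤ lam) {fstar : ℝ}
    (hlb : ∀ x, (fstar : EReal) ≤ F x) (x : H) : fstar ≤ Fl x :=
  hFl.le_of_forall_le fun y r hy ↦ by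
    have : fstar ≤ r := by exact_mod_cast hy ▸ hlb y
    have : 0 ≤ ‖y - x‖ ^ 2 / (2 * lam) := by positivity
    linarith

/-- Near `z`, lower semicontinuity keeps `F` above some `q > fstar`; away from `z`, the quadratic
penalty alone exceeds `ρ² / (2λ)`. -/
theorem lt_apply (hFl : IsMoreauEnvelope F lam Fl) (hlam : 0 < lam) {fstar : ℝ}
    (hlb : ∀ x, (fstar : EReal) ≤ F x) (hlsc : LowerSemicontinuous F) {z : H}
    (hz : (fstar : EReal) < F z) : fstar < Fl z := by
  obtain ⟨q, hfq, hqz⟩ := EReal.exists_between_coe_real hz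
  obtain ⟨ρ, hρ, hball⟩ := eventually_nhds_iff_ball.mp (hlsc z q hqz)
  have hq : fstar < q := by exact_mod_cast hfq
  have hρ' : 0 < ρ ^ 2 / (2 * lam) := by positivity
  refine (lt_min hq (lt_add_of_pos_right fstar hρ')).trans_le
    (hFl.le_of_forall_le fun y r hy ↦ ?_)
  have hfr : fstar ≤ r := by exact_mod_cast hy ▸ hlb y
  rcases lt_or_ge (dist y z) ρ with hyz | hyz
  · have : (q : EReal) < F y := hball y hyz
    have : q < r := by rwa [hy, EReal.coe_lt_coe_iff] at this
    have : 0 ≤ ‖y - z‖ ^ 2 / (2 * lam) := by positivity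
    linarith [min_le_left q (fstar + ρ ^ 2 / (2 * lam))]
  · have : ρ ^ 2 / (2 * lam) ≤ ‖y - z‖ ^ 2 / (2 * lam) := by
      rw [← dist_eq_norm]; gcongr
    linarith [min_le_right q (fstar + ρ ^ 2 / (2 * lam))]

theorem concaveOn_sub_sq_norm [InnerProductSpace ℝ H] (hFl : IsMoreauEnvelope F lam Fl) :
    ConcaveOn ℝ univ fun x ↦ Fl x - lam⁻¹ / 2 * ‖x‖ ^ 2 := by
  refine ⟨convex_univ, fun x _ z _ a b ha hb hab ↦ ?_⟩
  simp only [smul_eq_mul, le_sub_iff_add_le]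
  refine hFl.le_of_forall_le fun y r hy ↦ ?_
  have hx := mul_le_mul_of_nonneg_left (hFl.le_add hy x) ha
  have hz := mul_le_mul_of_nonneg_left (hFl.le_add hy z) hb
  have key : ‖y - (a • x + b • z)‖ ^ 2 = a * (‖y - x‖ ^ 2 - ‖x‖ ^ 2) + b * (‖y - z‖ ^ 2 - ‖z‖ ^ 2)
      + ‖a • x + b • z‖ ^ 2 := by
    simp only [norm_sub_sq_real, inner_add_right, real_inner_smul_right]
    linear_combination (‖y‖ ^ 2) * hab.symm
  rw [key]
  linear_combination hx + hz + r * hab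

theorem le_add_inner [InnerProductSpace ℝ H] [CompleteSpace H] (hFl : IsMoreauEnvelope F lam Fl)
    {x g : H} (hgrad : HasGradientAt Fl g x) (v : H) :
    Fl (x + v) ≤ Fl x + inner ℝ g v + lam⁻¹ / 2 * ‖v‖ ^ 2 := by
  have hd := hgrad.hasFDerivAt.sub
    ((hasStrictFDerivAt_norm_sq x).hasFDerivAt.const_mul (lam⁻¹ / 2))
  have := hFl.concaveOn_sub_sq_norm.le_add_of_hasFDerivAt hd v
  simp only [norm_add_sq_real, sub_apply, InnerProductSpace.toDual_apply_apply, smul_apply,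
    coe_innerSL_apply, nsmul_eq_mul, Nat.cast_ofNat, smul_eq_mul] at this
  linarith

end IsMoreauEnvelope

theorem moreau_pl_implies_qg_general {H : Type*} [NormedAddCommGroup H] [InnerProductSpace ℝ H]
    [CompleteSpace H]
    (F : H → EReal)
    (hlsc : LowerSemicontinuous F)
    (Fstar : ℝ) (hFstar : ∀ x, (Fstar : EReal) ≤ F x)
    (Xs : Set H) (hXs : Xs = {x | F x = (Fstar : EReal)})
    (lam : ℝ) (hlam : 0 < lam)
    (Fl : H → ℝ)
    (hFl : ∀ x, (Fl x : EReal) = ⨅ y, F y + ((‖y - x‖ ^ 2 / (2 * lam) : ℝ) : EReal))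
    (Fl' : H → H) (hgrad : ∀ x, HasGradientAt Fl (Fl' x) x)
    (μ : ℝ) (hμ : 0 < μ)
    (hpl : ∀ x, Fl x - Fstar ≤ 1 / (2 * μ) * ‖Fl' x‖ ^ 2) :
    ∀ x, ((μ / 2 * (Metric.infDist x Xs) ^ 2 : ℝ) : EReal) + (Fstar : EReal) ≤ F x := by
  intro x
  have hmoreau : IsMoreauEnvelope F lam Fl := hFl
  have hlb : ∀ y, Fstar ≤ Fl y := hmoreau.le_apply hlam.le hFstar
  have hargmin : {z | Fl z = Fstar} ⊆ Xs := fun z hz ↦ hXs ▸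
    ((hFstar z).eq_of_not_lt fun hlt ↦ (hmoreau.lt_apply hlam hFstar hlsc hlt).ne' hz).symm
  have hqg := mul_infDist_sq_le_of_pl
    (continuous_iff_continuousAt.2 fun y ↦ (hgrad y).continuousAt) (inv_pos.2 hlam)
    (fun y v ↦ hmoreau.le_add_inner (hgrad y) v) hpl hlb hμ hargmin x
  calc ((μ / 2 * infDist x Xs ^ 2 : ℝ) : EReal) + Fstar
      = ((μ / 2 * infDist x Xs ^ 2 + Fstar : ℝ) : EReal) := by norm_cast
    _ ≤ Fl x := by exact_mod_cast (by linarith : μ / 2 * infDist x Xs ^ 2 + Fstar ≤ Fl x)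
    _ ≤ F x := hmoreau.coe_le x

/-- If the Moreau envelope F_λ of a convex, proper, lsc function F satisfies the PL
condition with parameter μ, then F satisfies the quadratic growth condition with
parameter μ. -/
theorem moreau_pl_implies_qg {H : Type*} [NormedAddCommGroup H] [InnerProductSpace ℝ H]
    [CompleteSpace H]
    (F : H → EReal) (hconv : ∀ x y : H, ∀ a b : ℝ, 0 ≤ a → 0 ≤ b → a + b = 1 →
      F (a • x + b • y) ≤ (a : EReal) * F x + (b : EReal) * F y)
    (hlsc : LowerSemicontinuous F)
    (hproper : (∀ x, F x ≠ ⊥) ∧ ∃ x, F x ≠ ⊤)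
    (Fstar : ℝ) (hFstar : ∀ x, (Fstar : EReal) ≤ F x)
    (Xs : Set H) (hXs : Xs = {x | F x = (Fstar : EReal)}) (hne : Xs.Nonempty)
    (lam : ℝ) (hlam : 0 < lam)
    (Fl : H → ℝ)
    (hFl : ∀ x, (Fl x : EReal) = ⨅ y, F y + ((‖y - x‖ ^ 2 / (2 * lam) : ℝ) : EReal))
    (Fl' : H → H) (hgrad : ∀ x, HasGradientAt Fl (Fl' x) x)
    (μ : ℝ) (hμ : 0 < μ)
    (hpl : ∀ x, Fl x - Fstar ≤ 1 / (2 * μ) * ‖Fl' x‖ ^ 2) :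
    ∀ x, ((μ / 2 * (Metric.infDist x Xs) ^ 2 : ℝ) : EReal) + (Fstar : EReal) ≤ F x :=
  moreau_pl_implies_qg_general F hlsc Fstar hFstar Xs hXs lam hlam Fl hFl Fl' hgrad μ hμ hpl
end

section
/- Let F : H → ℝ be differentiable with L-Lipschitz gradient, argmin F ≠ ∅, satisfying PL with parameter μ > 0, and let x solve the heavy ball ODE ẍ + αẋ + ∇F(x) = 0, x(0) = x₀, ẋ(0) = 0. Let a, δ > 0, set R = α + δ - a, and define V(t) = a(F(x(t)) - F*) + ⟨∇F(x(t)), ẋ(t)⟩ + (δ/2)‖ẋ(t)‖². If R > 0, aR ≤ 2μ, and L - αδ + (δ/2)R ≤ 0, then V(t) ≤ a(F(x₀) - F*) e^{-Rt} for all t ≥ 0. -/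
/-!
The gradient `∇F(x(t))` is only Lipschitz in `t`, so `V` need not be differentiable; instead
its upper right Dini derivative is bounded. Along the flow, `ẍ = -αẋ - ∇F(x)` turns the formal
derivative of `V`, with `⟨d/dt ∇F(x), ẋ⟩` replaced by `L‖ẋ‖²`, into
`-R V - (‖∇F(x)‖² - aR (F(x) - F*)) + (L - αδ + δR/2)‖ẋ‖²`, and PL together with `aR ≤ 2μ`
makes the last two terms nonpositive. A Dini-derivative form of Grönwall's inequality then
gives `V(t) ≤ V(0) e^{-Rt}`.
-/

open Set Filter Topology RealInnerProductSpace

/-- `D` bounds the upper right Dini derivative `limsup_{z → s⁺} (g z - g s) / (z - s)`. -/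
def UpperRightDiniLE (g : ℝ → ℝ) (s D : ℝ) : Prop :=
  ∀ r, D < r → ∀ᶠ z in 𝓝[>] s, slope g s z < r

namespace UpperRightDiniLE

variable {g g₁ g₂ : ℝ → ℝ} {s D D₁ D₂ : ℝ}

lemma mono {D' : ℝ} (h : UpperRightDiniLE g s D) (hD : D ≤ D') : UpperRightDiniLE g s D' :=
  fun r hr => h r (hD.trans_lt hr)

lemma of_eventually_slope_le {A : ℝ → ℝ} (h : ∀ᶠ z in 𝓝[>] s, slope g s z ≤ A z)
    (hA : Tendsto A (𝓝[>] s) (𝓝 D)) : UpperRightDiniLE g s D :=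
  fun _ hr => ((hA.eventually_lt_const hr).and h).mono fun _ hz => hz.2.trans_lt hz.1

lemma add (h₁ : UpperRightDiniLE g₁ s D₁) (h₂ : UpperRightDiniLE g₂ s D₂) :
    UpperRightDiniLE (fun t => g₁ t + g₂ t) s (D₁ + D₂) := by
  intro r hr
  filter_upwards [h₁ (D₁ + (r - D₁ - D₂) / 2) (by linarith),
    h₂ (D₂ + (r - D₁ - D₂) / 2) (by linarith)] with z hz₁ hz₂
  rw [slope_def_field] at hz₁ hz₂ ⊢
  rw [add_sub_add_comm, add_div]
  linarith

end UpperRightDiniLE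

lemma HasDerivAt.upperRightDiniLE {g : ℝ → ℝ} {g' s : ℝ} (h : HasDerivAt g g' s) :
    UpperRightDiniLE g s g' :=
  fun _ hr => h.hasDerivWithinAt.limsup_slope_le' (lt_irrefl s) hr

lemma le_mul_exp_of_upperRightDiniLE {f : ℝ → ℝ} {a b K : ℝ} (hf : ContinuousOn f (Icc a b))
    (hf' : ∀ x ∈ Ico a b, UpperRightDiniLE f x (K * f x)) :
    ∀ ⦃x⦄, x ∈ Icc a b → f x ≤ f a * Real.exp (K * (x - a)) := by
  intro x hx
  -- the fence `B` below satisfies `B' > K B`, as the comparison theorem needs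
  have hfence : ∀ ε > 0,
      f x ≤ f a * Real.exp (K * (x - a)) + ε * Real.exp ((K + 1) * (x - a)) := by
    intro ε hε
    have hexp : ∀ c y, HasDerivAt (fun y => Real.exp (c * (y - a)))
        (c * Real.exp (c * (y - a))) y := fun c y => by
      simpa [mul_comm] using (((hasDerivAt_id y).sub_const a).const_mul c).exp
    refine image_le_of_liminf_slope_right_lt_deriv_boundary hf
      (fun y hy r hr => (hf' y hy r hr).frequently) (by simp [hε.le])
      (fun y => ((hexp K y).const_mul (f a)).add ((hexp (K + 1) y).const_mul ε))
      (fun y _ hy => ?_) hx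
    rw [hy, Pi.add_apply]
    nlinarith [mul_pos hε (Real.exp_pos ((K + 1) * (y - a)))]
  refine le_of_forall_pos_le_add fun ε hε => ?_
  have hpos := Real.exp_pos ((K + 1) * (x - a))
  simpa [div_mul_cancel₀ _ hpos.ne'] using
    hfence (ε / Real.exp ((K + 1) * (x - a))) (by positivity)

lemma upperRightDiniLE_inner_comp_of_lipschitzWith {X E : Type*} [NormedAddCommGroup X]
    [NormedSpace ℝ X] [NormedAddCommGroup E] [InnerProductSpace ℝ E] {G : X → E} {K : NNReal}
    (hG : LipschitzWith K G) {x : ℝ → X} {v : ℝ → E} {s : ℝ} {x' : X} {v' : E}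
    (hx : HasDerivAt x x' s) (hv : HasDerivAt v v' s) :
    UpperRightDiniLE (fun t => ⟪G (x t), v t⟫) s (K * ‖x'‖ * ‖v s‖ + ⟪G (x s), v'⟫) := by
  have hx' : Tendsto (slope x s) (𝓝[>] s) (𝓝 x') :=
    (hasDerivAt_iff_tendsto_slope.1 hx).mono_left (nhdsGT_le_nhdsNE s)
  have hv' : Tendsto (slope v s) (𝓝[>] s) (𝓝 v') :=
    (hasDerivAt_iff_tendsto_slope.1 hv).mono_left (nhdsGT_le_nhdsNE s)
  have hvs : Tendsto v (𝓝[>] s) (𝓝 (v s)) := hv.continuousAt.tendsto.mono_left nhdsWithin_le_nhds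
  refine .of_eventually_slope_le ?_
    (((hx'.norm.const_mul (K : ℝ)).mul hvs.norm).add (tendsto_const_nhds.inner hv'))
  filter_upwards [self_mem_nhdsWithin] with z (hz : s < z)
  have hinv : 0 ≤ (z - s)⁻¹ := inv_nonneg.2 (sub_pos.2 hz).le
  have hsplit : slope (fun t => ⟪G (x t), v t⟫) s z =
      (z - s)⁻¹ * ⟪G (x z) - G (x s), v z⟫ + ⟪G (x s), slope v s z⟫ := by
    simp only [slope_def_module, smul_eq_mul, inner_smul_right, inner_sub_left, inner_sub_right]
    ring
  have hlip : ⟪G (x z) - G (x s), v z⟫ ≤ K * ‖x z - x s‖ * ‖v z‖ := (real_inner_le_norm _ _).trans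
    (mul_le_mul_of_nonneg_right (hG.norm_sub_le _ _) (norm_nonneg _))
  rw [hsplit, slope_def_module x, norm_smul, Real.norm_of_nonneg hinv]
  nlinarith [mul_le_mul_of_nonneg_left hlip hinv]

/-- Along `w = -α v - p`, with `p = ∇F(x)`, `g = F(x) - F*`, and `L‖v‖²` standing for
`⟨d/dt ∇F(x), v⟩`, the formal derivative of the Lyapunov function is at most `-R` times it. -/
lemma heavy_ball_lyapunov_rate {H : Type*} [NormedAddCommGroup H] [InnerProductSpace ℝ H]
    {p v w : H} {g L μ α a δ R : ℝ} (hw : w + α • v + p = 0) (hg : 0 ≤ g)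
    (hpl : g ≤ 1 / (2 * μ) * ‖p‖ ^ 2) (hμ : 0 < μ) (hRdef : R = α + δ - a)
    (hH1 : a * R ≤ 2 * μ) (hH2 : L - α * δ + δ / 2 * R ≤ 0) :
    a * ⟪p, v⟫ + (L * ‖v‖ * ‖v‖ + ⟪p, w⟫) + δ / 2 * (2 * ⟪v, w⟫) ≤
      -R * (a * g + ⟪p, v⟫ + δ / 2 * ‖v‖ ^ 2) := by
  have hw' : w = -(α • v) - p := by linear_combination (norm := module) hw
  have hpw : ⟪p, w⟫ = -α * ⟪p, v⟫ - ‖p‖ ^ 2 := by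
    simp [hw', inner_sub_right, real_inner_smul_right]
  have hvw : ⟪v, w⟫ = -α * ‖v‖ ^ 2 - ⟪v, p⟫ := by
    simp [hw', inner_sub_right, real_inner_smul_right]
  have hPL : a * R * g ≤ ‖p‖ ^ 2 := calc
    a * R * g ≤ 2 * μ * g := mul_le_mul_of_nonneg_right hH1 hg
    _ ≤ ‖p‖ ^ 2 := by rwa [one_div_mul_eq_div, le_div_iff₀' (by positivity)] at hpl
  rw [hpw, hvw, real_inner_comm v p]
  subst hRdef
  nlinarith [mul_nonpos_of_nonpos_of_nonneg hH2 (sq_nonneg ‖v‖)]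

theorem heavy_ball_lyapunov_decay_general {H : Type*} [NormedAddCommGroup H] [InnerProductSpace ℝ H]
    [CompleteSpace H]
    (F : H → ℝ) (F' : H → H) (hdiff : ∀ z, HasGradientAt F (F' z) z)
    (L : ℝ) (hL : 0 < L) (hlip : LipschitzWith (Real.toNNReal L) F')
    (Fstar : ℝ) (hFstar : ∀ z, Fstar ≤ F z)
    (μ : ℝ) (hμ : 0 < μ)
    (hpl : ∀ z, F z - Fstar ≤ 1 / (2 * μ) * ‖F' z‖ ^ 2)
    (α : ℝ)
    (x v w : ℝ → H) (x₀ : H)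
    (hx : ∀ t, HasDerivAt x (v t) t) (hv : ∀ t, HasDerivAt v (w t) t)
    (hode : ∀ t, w t + α • v t + F' (x t) = 0)
    (hx0 : x 0 = x₀) (hv0 : v 0 = 0)
    (a δ R : ℝ) (hRdef : R = α + δ - a)
    (hH1 : a * R ≤ 2 * μ) (hH2 : L - α * δ + δ / 2 * R ≤ 0)
    (V : ℝ → ℝ)
    (hV : ∀ t, V t = a * (F (x t) - Fstar) + ⟪F' (x t), v t⟫ + δ / 2 * ‖v t‖ ^ 2) :
    ∀ t, 0 ≤ t → V t ≤ a * (F x₀ - Fstar) * Real.exp (-R * t) := by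
  have hFx (t : ℝ) : HasDerivAt (fun t => a * (F (x t) - Fstar)) (a * ⟪F' (x t), v t⟫) t :=
    (((hdiff (x t)).hasFDerivAt.comp_hasDerivAt t (hx t)).sub_const Fstar).const_mul a
  have hV_eq : V = fun t => a * (F (x t) - Fstar) + ⟪F' (x t), v t⟫ + δ / 2 * ‖v t‖ ^ 2 :=
    funext hV
  have hxc : Continuous x := continuous_iff_continuousAt.2 fun t => (hx t).continuousAt
  have hvc : Continuous v := continuous_iff_continuousAt.2 fun t => (hv t).continuousAt
  have hVc : Continuous V := by
    rw [hV_eq]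
    exact ((continuous_iff_continuousAt.2 fun t => (hFx t).continuousAt).add
      ((hlip.continuous.comp hxc).inner hvc)).add (continuous_const.mul (hvc.norm.pow 2))
  have hdini (s : ℝ) : UpperRightDiniLE V s (-R * V s) := by
    have hrate := heavy_ball_lyapunov_rate (hode s) (sub_nonneg.2 (hFstar (x s))) (hpl (x s)) hμ
      hRdef hH1 hH2
    rw [hV s, hV_eq]
    refine (((hFx s).upperRightDiniLE.add (upperRightDiniLE_inner_comp_of_lipschitzWith hlip
      (hx s) (hv s))).add (((hv s).norm_sq.const_mul (δ / 2)).upperRightDiniLE)).mono ?_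
    rwa [Real.coe_toNNReal L hL.le]
  intro t ht
  simpa [hV 0, hx0, hv0] using
    le_mul_exp_of_upperRightDiniLE hVc.continuousOn (fun s _ => hdini s) ⟨ht, le_rfl⟩

/-- Lyapunov estimate: under PL and the parameter conditions, the energy
V(t) = a(F(x(t)) - F*) + ⟨∇F(x(t)), ẋ(t)⟩ + (δ/2)‖ẋ(t)‖² decays linearly. -/
theorem heavy_ball_lyapunov_decay {H : Type*} [NormedAddCommGroup H] [InnerProductSpace ℝ H]
    [CompleteSpace H]
    (F : H → ℝ) (F' : H → H) (hdiff : ∀ z, HasGradientAt F (F' z) z)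
    (L : ℝ) (hL : 0 < L) (hlip : LipschitzWith (Real.toNNReal L) F')
    (Fstar : ℝ) (hFstar : ∀ z, Fstar ≤ F z) (hattain : ∃ z, F z = Fstar)
    (μ : ℝ) (hμ : 0 < μ)
    (hpl : ∀ z, F z - Fstar ≤ 1 / (2 * μ) * ‖F' z‖ ^ 2)
    (α : ℝ) (hα : 0 < α)
    (x v w : ℝ → H) (x₀ : H)
    (hx : ∀ t, HasDerivAt x (v t) t) (hv : ∀ t, HasDerivAt v (w t) t)
    (hode : ∀ t, w t + α • v t + F' (x t) = 0)
    (hx0 : x 0 = x₀) (hv0 : v 0 = 0)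
    (a δ R : ℝ) (ha : 0 < a) (hδ : 0 < δ) (hRdef : R = α + δ - a)
    (hR : 0 < R) (hH1 : a * R ≤ 2 * μ) (hH2 : L - α * δ + δ / 2 * R ≤ 0)
    (V : ℝ → ℝ)
    (hV : ∀ t, V t = a * (F (x t) - Fstar) + ⟪F' (x t), v t⟫ + δ / 2 * ‖v t‖ ^ 2) :
    ∀ t, 0 ≤ t → V t ≤ a * (F x₀ - Fstar) * Real.exp (-R * t) :=
  heavy_ball_lyapunov_decay_general F F' hdiff L hL hlip Fstar hFstar μ hμ hpl α x v w x₀ hx hv hode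
    hx0 hv0 a δ R hRdef hH1 hH2 V hV
end

section
/- Let L ≥ μ > 0 with κ = L/μ, δ > 0, and α₋ = (1/2)(δ + 3L/δ - √((δ + L/δ)² - 4μ)). Then the strict inequality (1/3)(δ + 4L/δ) < α₋ holds if and only if κ < 9/8 and δ ∈ (δ₋, δ₊), where δ_± = (1/(2√2))(3√μ ± √(9μ - 8L)). -/
/-!
Writing `s = δ + L/δ`, the inequality says `√(s² - 4μ) < s / 3`, i.e. `s² < (9/2) μ`, i.e.
`s < b` with `b = √((9/2) μ)`. Multiplying by `δ > 0` turns this into the quadratic inequality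
`δ² - b δ + L < 0`, which holds exactly when the discriminant `b² - 4L = (9μ - 8L)/2` is positive
and `δ` lies strictly between the two roots `δ_±`.
-/

open Real

theorem sqrt_sq_sub_lt_div_three_iff {s : ℝ} (hs : 0 < s) (μ : ℝ) :
    √(s ^ 2 - 4 * μ) < s / 3 ↔ s ^ 2 < 9 / 2 * μ := by
  rw [sqrt_lt' (by positivity)]
  constructor <;> intro h <;> linarith

theorem add_div_lt_iff_sq_sub_mul_add_neg {δ : ℝ} (hδ : 0 < δ) (L b : ℝ) :
    δ + L / δ < b ↔ δ ^ 2 - b * δ + L < 0 := by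
  rw [← mul_lt_mul_iff_of_pos_right hδ, add_mul, div_mul_cancel₀ L hδ.ne']
  constructor <;> intro h <;> nlinarith

theorem quadratic_neg_iff_mem_roots (x b c : ℝ) :
    x ^ 2 - b * x + c < 0 ↔
      0 < b ^ 2 - 4 * c ∧ (b - √(b ^ 2 - 4 * c)) / 2 < x ∧ x < (b + √(b ^ 2 - 4 * c)) / 2 := by
  have hsq : x ^ 2 - b * x + c < 0 ↔ |2 * x - b| < √(b ^ 2 - 4 * c) := by
    rw [lt_sqrt (abs_nonneg _), sq_abs]
    constructor <;> intro h <;> nlinarith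
  rw [hsq, abs_sub_lt_iff]
  constructor
  · rintro ⟨h₁, h₂⟩
    have hD : 0 < √(b ^ 2 - 4 * c) := by linarith
    exact ⟨sqrt_pos.mp hD, by linarith, by linarith⟩
  · rintro ⟨-, h₁, h₂⟩
    constructor <;> linarith

/-- Characterization of when (1/3)(δ + 4L/δ) < α₋. -/
theorem threshold_lt_alpha_minus_iff (L μ δ : ℝ) (hμ : 0 < μ) (hLμ : μ ≤ L) (hδ : 0 < δ) :
    1 / 3 * (δ + 4 * L / δ) <
      1 / 2 * (δ + 3 * L / δ - Real.sqrt ((δ + L / δ) ^ 2 - 4 * μ)) ↔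
    (L / μ < 9 / 8 ∧
      1 / (2 * Real.sqrt 2) * (3 * Real.sqrt μ - Real.sqrt (9 * μ - 8 * L)) < δ ∧
      δ < 1 / (2 * Real.sqrt 2) * (3 * Real.sqrt μ + Real.sqrt (9 * μ - 8 * L))) := by
  have hs : 0 < δ + L / δ := by have := hμ.trans_le hLμ; positivity
  have hb : √(9 / 2 * μ) = 3 * √μ / √2 := by
    rw [show 9 / 2 * μ = 3 ^ 2 * μ / 2 by ring, sqrt_div' _ zero_le_two,
      sqrt_mul (by positivity), sqrt_sq (by positivity)]
  have hD : √(9 / 2 * μ) ^ 2 - 4 * L = (9 * μ - 8 * L) / 2 := by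
    rw [sq_sqrt (by positivity)]; ring
  have hκ : 0 < (9 * μ - 8 * L) / 2 ↔ L / μ < 9 / 8 := by
    rw [div_lt_iff₀ hμ]; constructor <;> intro h <;> linarith
  have hthreshold : 1 / 3 * (δ + 4 * L / δ) <
      1 / 2 * (δ + 3 * L / δ - √((δ + L / δ) ^ 2 - 4 * μ)) ↔
      √((δ + L / δ) ^ 2 - 4 * μ) < (δ + L / δ) / 3 := by
    constructor <;> intro h <;> linarith [show 4 * L / δ = 4 * (L / δ) by ring,
      show 3 * L / δ = 3 * (L / δ) by ring]
  rw [hthreshold, sqrt_sq_sub_lt_div_three_iff hs, ← lt_sqrt hs.le,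
    add_div_lt_iff_sq_sub_mul_add_neg hδ, quadratic_neg_iff_mem_roots, hD, hκ,
    sqrt_div' _ zero_le_two, hb]
  congr! 3 <;> ring
end

section
/- Define r : (0,∞) → ℝ by r(δ) = δ + L/δ - √((δ + L/δ)² - 4μ) for fixed L > μ > 0. Then r attains its maximum over δ > 0 at δ* = √L, with maximum value r(√L) = 2√L - 2√(L - μ) = 2(√κ - √(κ-1))√μ where κ = L/μ. -/
lemma phi_mono (L μ : ℝ) (hμ : 0 < μ) (hL : μ < L) (s : ℝ)
    (hs : 2 * Real.sqrt L ≤ s) :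
    s - Real.sqrt (s ^ 2 - 4 * μ) ≤ 2 * Real.sqrt L - 2 * Real.sqrt (L - μ) := by
  have hL0 : (0:ℝ) < L := hμ.trans hL
  have hsL : Real.sqrt L ^ 2 = L := Real.sq_sqrt hL0.le
  have hsLpos : 0 < Real.sqrt L := Real.sqrt_pos.mpr hL0
  have hspos : 0 < s := lt_of_lt_of_le (by positivity) hs
  have ht2 : (2 * Real.sqrt L) ^ 2 - 4 * μ = 4 * (L - μ) := by ring_nf; nlinarith
  have hb : Real.sqrt ((2 * Real.sqrt L) ^ 2 - 4 * μ) = 2 * Real.sqrt (L - μ) := by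
    rw [ht2, show (4:ℝ) * (L - μ) = 2 ^ 2 * (L - μ) by ring, Real.sqrt_mul (by positivity),
      Real.sqrt_sq (by norm_num)]
  set a := Real.sqrt (s ^ 2 - 4 * μ) with ha
  set b := Real.sqrt (L - μ) with hbdef
  have hbpos : 0 < b := Real.sqrt_pos.mpr (by linarith)
  have hb2 : b ^ 2 = L - μ := Real.sq_sqrt (by linarith)
  have hs2nn : 0 ≤ s ^ 2 - 4 * μ := by nlinarith
  have ha2 : a ^ 2 = s ^ 2 - 4 * μ := Real.sq_sqrt hs2nn
  have hann : 0 ≤ a := Real.sqrt_nonneg _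
  have hab : a ≤ s := by
    nlinarith
  -- want s - a ≤ 2√L - 2b
  have hble : b ≤ Real.sqrt L := by nlinarith
  have hsum : a + 2 * b ≤ s + 2 * Real.sqrt L := by linarith
  have key : (a - 2 * b) * (a + 2 * b) = (s - 2 * Real.sqrt L) * (s + 2 * Real.sqrt L) := by
    nlinarith
  nlinarith [mul_nonneg (sub_nonneg.mpr hs) (sub_nonneg.mpr hsum), key]

/-- The convergence factor r(δ) = δ + L/δ - √((δ + L/δ)² - 4μ) is maximized at δ = √L,
with maximal value 2√L - 2√(L - μ) = 2(√κ - √(κ-1))√μ, κ = L/μ. -/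
theorem rate_maximized_at_sqrtL (L μ : ℝ) (hμ : 0 < μ) (hL : μ < L) :
    (∀ δ : ℝ, 0 < δ →
      δ + L / δ - Real.sqrt ((δ + L / δ) ^ 2 - 4 * μ) ≤
      Real.sqrt L + L / Real.sqrt L -
        Real.sqrt ((Real.sqrt L + L / Real.sqrt L) ^ 2 - 4 * μ)) ∧
    Real.sqrt L + L / Real.sqrt L -
        Real.sqrt ((Real.sqrt L + L / Real.sqrt L) ^ 2 - 4 * μ) =
      2 * Real.sqrt L - 2 * Real.sqrt (L - μ) ∧
    2 * Real.sqrt L - 2 * Real.sqrt (L - μ) =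
      2 * (Real.sqrt (L / μ) - Real.sqrt (L / μ - 1)) * Real.sqrt μ := by
  have hL0 : (0:ℝ) < L := hμ.trans hL
  have hsLpos : 0 < Real.sqrt L := Real.sqrt_pos.mpr hL0
  have hdiv : L / Real.sqrt L = Real.sqrt L := Real.div_sqrt
  have hmax : Real.sqrt L + L / Real.sqrt L -
      Real.sqrt ((Real.sqrt L + L / Real.sqrt L) ^ 2 - 4 * μ) =
      2 * Real.sqrt L - 2 * Real.sqrt (L - μ) := by
    rw [hdiv, show Real.sqrt L + Real.sqrt L = 2 * Real.sqrt L by ring]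
    have hsL : Real.sqrt L ^ 2 = L := Real.sq_sqrt hL0.le
    have ht2 : (2 * Real.sqrt L) ^ 2 - 4 * μ = 4 * (L - μ) := by nlinarith
    rw [ht2, show (4:ℝ) * (L - μ) = 2 ^ 2 * (L - μ) by ring, Real.sqrt_mul (by positivity),
      Real.sqrt_sq (by norm_num)]
  refine ⟨fun δ hδ => ?_, hmax, ?_⟩
  · rw [hmax]
    have hsL : Real.sqrt L ^ 2 = L := Real.sq_sqrt hL0.le
    have hge : 2 * Real.sqrt L ≤ δ + L / δ := by
      rw [← sub_nonneg]
      have e : δ + L / δ - 2 * Real.sqrt L = (δ - Real.sqrt L) ^ 2 / δ := by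
        field_simp
        nlinarith
      rw [e]; positivity
    exact phi_mono L μ hμ hL _ hge
  · have h1 : Real.sqrt (L / μ) * Real.sqrt μ = Real.sqrt L := by
      rw [← Real.sqrt_mul (by positivity)]
      congr 1; field_simp
    have hk : (0:ℝ) ≤ L / μ - 1 := by
      rw [sub_nonneg, le_div_iff₀ hμ]; linarith
    have h2 : Real.sqrt (L / μ - 1) * Real.sqrt μ = Real.sqrt (L - μ) := by
      rw [← Real.sqrt_mul hk]
      congr 1; field_simp
    nlinarith [h1, h2]
end

section
/- Let F : H → (-∞,+∞] be convex, proper, lsc, M-Lipschitz continuous on H, with argmin F ≠ ∅ and F_λ its Moreau envelope for λ > 0. Then for all x ∈ H: F(x) - F* ≤ Mλ‖∇F_λ(x)‖ + (F_λ(x) - F*) - (λ/2)‖∇F_λ(x)‖², where F* = min F = min F_λ. In particular F(x) - F* ≤ Mλ‖∇F_λ(x)‖ + (F_λ(x) - F*). -/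
/-! The proximal point `p = prox x` is reached from `x` by the step `x - p = λ ∇F_λ(x)`.
Lipschitz continuity bounds `F x` by `F p + M ‖x - p‖ = F p + M λ ‖∇F_λ(x)‖`, while
`F_λ(x) = F p + (λ/2) ‖∇F_λ(x)‖²`; subtracting the two gives the bound, and dropping the
nonnegative quadratic term gives the weaker one. -/

open scoped NNReal

theorem norm_eq_mul_norm_one_div_smul {E : Type*} [SeminormedAddCommGroup E] [NormedSpace ℝ E]
    {lam : ℝ} (hlam : 0 < lam) (v : E) : ‖v‖ = lam * ‖(1 / lam) • v‖ := by
  rw [norm_smul, Real.norm_of_nonneg (by positivity), ← mul_assoc, mul_one_div_cancel hlam.ne',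
    one_mul]

theorem LipschitzWith.le_prox_objective_add_sub {E : Type*} [SeminormedAddCommGroup E]
    [NormedSpace ℝ E] {F : E → ℝ} {K : ℝ≥0} (hF : LipschitzWith K F) {lam : ℝ} (hlam : 0 < lam)
    (x p : E) :
    F x ≤ (F p + ‖x - p‖ ^ 2 / (2 * lam)) + K * lam * ‖(1 / lam) • (x - p)‖
      - lam / 2 * ‖(1 / lam) • (x - p)‖ ^ 2 := by
  have hstep := norm_eq_mul_norm_one_div_smul hlam (x - p)
  have hquad : ‖x - p‖ ^ 2 / (2 * lam) = lam / 2 * ‖(1 / lam) • (x - p)‖ ^ 2 := by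
    rw [hstep]
    field_simp
  have hlip : F x ≤ F p + K * ‖x - p‖ := by simpa only [dist_eq_norm] using hF.le_add_mul x p
  rw [hstep] at hlip
  rw [hquad]
  linarith

theorem lipschitz_moreau_bound_general {H : Type*} [NormedAddCommGroup H] [InnerProductSpace ℝ H]
    (F : H → ℝ)
    (M : ℝ) (hM : 0 ≤ M) (hlip : LipschitzWith (Real.toNNReal M) F)
    (Fstar : ℝ)
    (lam : ℝ) (hlam : 0 < lam)
    (Fl : H → ℝ) (prox : H → H)
    (hFl : ∀ x, Fl x = F (prox x) + ‖x - prox x‖ ^ 2 / (2 * lam))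
    (Fl' : H → H)
    (hgrad_eq : ∀ x, Fl' x = (1 / lam) • (x - prox x)) :
    (∀ x, F x - Fstar ≤
      M * lam * ‖Fl' x‖ + (Fl x - Fstar) - lam / 2 * ‖Fl' x‖ ^ 2) ∧
    (∀ x, F x - Fstar ≤ M * lam * ‖Fl' x‖ + (Fl x - Fstar)) := by
  have hbound : ∀ x, F x - Fstar ≤
      M * lam * ‖Fl' x‖ + (Fl x - Fstar) - lam / 2 * ‖Fl' x‖ ^ 2 := fun x => by
    have h := hlip.le_prox_objective_add_sub hlam x (prox x)
    rw [Real.coe_toNNReal _ hM, ← hFl, ← hgrad_eq] at h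
    linarith
  refine ⟨hbound, fun x => ?_⟩
  have hquad_nonneg : 0 ≤ lam / 2 * ‖Fl' x‖ ^ 2 := by positivity
  linarith [hbound x]

/-- For an M-Lipschitz convex function F with Moreau envelope F_λ:
F(x) - F* ≤ Mλ‖∇F_λ(x)‖ + (F_λ(x) - F*) - (λ/2)‖∇F_λ(x)‖². -/
theorem lipschitz_moreau_bound {H : Type*} [NormedAddCommGroup H] [InnerProductSpace ℝ H]
    [CompleteSpace H]
    (F : H → ℝ) (hconv : ConvexOn ℝ Set.univ F)
    (M : ℝ) (hM : 0 ≤ M) (hlip : LipschitzWith (Real.toNNReal M) F)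
    (Fstar : ℝ) (hFstar : ∀ z, Fstar ≤ F z) (hattain : ∃ z, F z = Fstar)
    (lam : ℝ) (hlam : 0 < lam)
    (Fl : H → ℝ) (prox : H → H)
    (hFl : ∀ x, Fl x = F (prox x) + ‖x - prox x‖ ^ 2 / (2 * lam))
    (hproxmin : ∀ x y, Fl x ≤ F y + ‖y - x‖ ^ 2 / (2 * lam))
    (Fl' : H → H) (hgrad : ∀ x, HasGradientAt Fl (Fl' x) x)
    (hgrad_eq : ∀ x, Fl' x = (1 / lam) • (x - prox x)) :
    (∀ x, F x - Fstar ≤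
      M * lam * ‖Fl' x‖ + (Fl x - Fstar) - lam / 2 * ‖Fl' x‖ ^ 2) ∧
    (∀ x, F x - Fstar ≤ M * lam * ‖Fl' x‖ + (Fl x - Fstar)) :=
  lipschitz_moreau_bound_general F M hM hlip Fstar lam hlam Fl prox hFl Fl' hgrad_eq
end
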